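/- Let d, n, p ∈ ℕ, r ≠ l ∈ {1,...,n+1}, and β ∈ ℕ A_{d,n} with deg β ≥ p+2. Let η = ⟨a^1,...,a^{p+1}⟩ ∗ C be a UFO_{p+1,p+1}^r in Δ_β, i.e. η is a p-simplex ⟨a^1,...,a^{p+1}⟩ in Δ_β (so C is the empty cycle) with (a^1+⋯+a^{p+1})_r = β_r and all (a^j)_r > 0. Then there exists a p-chain η̃ in Δ_{β + e_l − e_r} with ∂η̃ = ∂η. -/
import Mathlib


open Finset

/-- `A_{d,n}`: the exponent vectors of the degree-`d` monomials in `n+1` variables,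
i.e. `{x ∈ ℕ^{n+1} : Σ_i x_i = d}`. -/
def Adn (d n : ℕ) : Set (Fin (n + 1) → ℕ) :=
  {x | ∑ i, x i = d}

/-- `F` is a face of the simplicial complex `Δ_v` on the vertex set `A_{d,n}`:
all vertices of `F` lie in `A_{d,n}` and the coordinatewise sum of the vertices of `F`
is at most `v`. -/
def IsFace (d n : ℕ) (v : Fin (n + 1) → ℕ) (F : Finset (Fin (n + 1) → ℕ)) : Prop :=
  ↑F ⊆ Adn d n ∧ ∀ i, ∑ a ∈ F, a i ≤ v i

/-- (Ordered) simplicial `k`-chains with complex coefficients on the vertex set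
`ℕ^{n+1} ⊇ A_{d,n}`: formal `ℂ`-linear combinations of `(k+1)`-tuples of vertices. -/
abbrev PChain (n k : ℕ) : Type :=
  (Fin (k + 1) → (Fin (n + 1) → ℕ)) →₀ ℂ

/-- The simplicial boundary operator on ordered chains. -/
noncomputable def bdry {n k : ℕ} (c : PChain n (k + 1)) : PChain n k :=
  c.sum fun σ a =>
    ∑ i : Fin (k + 2), ((-1 : ℂ) ^ (i : ℕ) * a) • Finsupp.single (σ ∘ i.succAbove) 1

/-- The augmentation (sum of coefficients) of a chain. -/
noncomputable def aug {n k : ℕ} (c : PChain n k) : ℂ :=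
  c.sum fun _ a => a

/-- (Reduced) cycles: in positive degree, chains with vanishing boundary; in degree `0`,
chains with vanishing augmentation. -/
def IsCycle {n : ℕ} : ∀ {k : ℕ}, PChain n k → Prop
  | 0, c => aug c = 0
  | _ + 1, c => bdry c = 0

/-- The chain `c` is supported on the simplicial complex `Δ_v`. -/
def ChainIn (d n : ℕ) (v : Fin (n + 1) → ℕ) {k : ℕ} (c : PChain n k) : Prop :=
  ∀ σ ∈ c.support, IsFace d n v (Finset.image σ Finset.univ)

/-- Vanishing of the `k`-th reduced (simplicial) homology of `Δ_v` with `ℂ`-coefficients: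
every supported `k`-cycle is the boundary of a supported `(k+1)`-chain. -/
def Hvanish (d n k : ℕ) (v : Fin (n + 1) → ℕ) : Prop :=
  ∀ c : PChain n k, ChainIn d n v c → IsCycle c →
    ∃ η : PChain n (k + 1), ChainIn d n v η ∧ bdry η = c

/-- The `r`-th standard basis vector `e_r` of `ℕ^m`. -/
def ee {m : ℕ} (r : Fin m) : Fin m → ℕ := fun i => if i = r then 1 else 0

/-- Join of a chain with a vertex: `a ∗ c`. -/
noncomputable def vjoin {n k : ℕ} (a : Fin (n + 1) → ℕ) (c : PChain n k) :
    PChain n (k + 1) :=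
  c.sum fun τ b => b • Finsupp.single (Fin.cons a τ) 1

/-- Join of two chains, `c₁ ∗ c₂` (with the appropriate sign conventions). -/
noncomputable def joinChain {n s t : ℕ} (c₁ : PChain n s) (c₂ : PChain n t) :
    PChain n (s + t + 1) :=
  ((-1 : ℂ) ^ (s * (s + 1) / 2)) •
    c₁.sum fun σ a => c₂.sum fun τ b =>
      (a * b) • Finsupp.single
        (fun i : Fin (s + t + 1 + 1) =>
          Fin.append σ τ (Fin.cast (show s + t + 1 + 1 = (s + 1) + (t + 1) by omega) i)) 1

/-- Reindexing of chains along an equality of dimensions. -/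
noncomputable def castChain {n k k' : ℕ} (h : k = k') (c : PChain n k) : PChain n k' :=
  Finsupp.mapDomain (fun σ => σ ∘ Fin.cast (show k' + 1 = k + 1 by omega)) c

/-- The chain `c` is supported on the union complex
`X_b = Δ_b ∪ Δ_{b−e₁+e₂} ∪ ⋯ ∪ Δ_{b−b₁e₁+b₁e₂}` (coordinates `e₁, e₂` are the
first two coordinates, i.e. indices `0, 1`). -/
def ChainInX (d n : ℕ) (b : Fin (n + 1) → ℕ) {k : ℕ} (c : PChain n k) : Prop :=
  ∀ σ ∈ c.support, ∃ j ≤ b 0,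
    IsFace d n (fun i => if i = 0 then b 0 - j else if i = 1 then b 1 + j else b i)
      (Finset.image σ Finset.univ)

section StmtAux

lemma val_succAbove' {m : ℕ} (p : Fin (m + 1)) (i : Fin m) :
    ((p.succAbove i : Fin (m + 1)) : ℕ) = if (i : ℕ) < (p : ℕ) then (i : ℕ) else (i : ℕ) + 1 := by
  rw [Fin.succAbove]
  split_ifs with h1 h2 h2 <;> simp_all [Fin.lt_def]

lemma comp_swap' {k : ℕ} (i i' : Fin (k + 2)) (j j' : Fin (k + 1))
    (h : (j : ℕ) < (i : ℕ)) (h1 : (i' : ℕ) = (j : ℕ)) (h2 : (j' : ℕ) = (i : ℕ) - 1) :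
    i.succAbove ∘ j.succAbove = i'.succAbove ∘ j'.succAbove := by
  funext m
  apply Fin.ext
  simp only [Function.comp_apply, val_succAbove']
  split_ifs <;> omega

lemma pair_cancel {k : ℕ} {M : Type*} [AddCommGroup M] [Module ℂ M]
    (f : (Fin k → Fin (k + 2)) → M) (i i' : Fin (k + 2)) (j j' : Fin (k + 1))
    (hc : i.succAbove ∘ j.succAbove = i'.succAbove ∘ j'.succAbove)
    (hs : ((i : ℕ) + (j : ℕ)) + 1 = (i' : ℕ) + (j' : ℕ) ∨
          ((i' : ℕ) + (j' : ℕ)) + 1 = (i : ℕ) + (j : ℕ)) :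
    (-1 : ℂ) ^ ((i : ℕ) + (j : ℕ)) • f (i.succAbove ∘ j.succAbove) +
      (-1 : ℂ) ^ ((i' : ℕ) + (j' : ℕ)) • f (i'.succAbove ∘ j'.succAbove) = 0 := by
  rw [hc, ← add_smul]
  rcases hs with hs | hs
  · rw [← hs, pow_succ]
    ring_nf
    simp
  · rw [← hs, pow_succ]
    ring_nf
    simp

lemma double_sum_cancel {k : ℕ} {M : Type*} [AddCommGroup M] [Module ℂ M]
    (f : (Fin k → Fin (k + 2)) → M) :
    ∑ i : Fin (k + 2), ∑ j : Fin (k + 1),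
      (-1 : ℂ) ^ ((i : ℕ) + (j : ℕ)) • f (i.succAbove ∘ j.succAbove) = 0 := by
  rw [← Finset.sum_product']
  refine Finset.sum_ninvolution
    (fun p => if h : (p.2 : ℕ) < (p.1 : ℕ)
      then (⟨(p.2 : ℕ), by omega⟩, ⟨(p.1 : ℕ) - 1, by omega⟩)
      else (⟨(p.2 : ℕ) + 1, by have := p.2.isLt; omega⟩, ⟨(p.1 : ℕ), by omega⟩))
    ?_ ?_ (fun _ => by simp) ?_
  · rintro ⟨i, j⟩
    dsimp only
    by_cases h : (j : ℕ) < (i : ℕ)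
    · rw [dif_pos h]
      exact pair_cancel f i _ j _ (comp_swap' _ _ _ _ h rfl rfl) (by right; simp <;> omega)
    · rw [dif_neg h]
      exact pair_cancel f i _ j _
        ((comp_swap' _ i _ j (by simp; omega) rfl (by simp)).symm) (by left; simp <;> omega)
  · rintro ⟨i, j⟩ _
    dsimp only
    by_cases h : (j : ℕ) < (i : ℕ)
    · rw [dif_pos h]
      intro hq
      have := congrArg (fun q : Fin (k + 2) × Fin (k + 1) => (q.1 : ℕ)) hq
      simp at this
      omega
    · rw [dif_neg h]
      intro hq
      have := congrArg (fun q : Fin (k + 2) × Fin (k + 1) => (q.1 : ℕ)) hq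
      simp at this
      omega
  · rintro ⟨i, j⟩
    dsimp only
    by_cases h : (j : ℕ) < (i : ℕ)
    · rw [dif_pos h, dif_neg (by simp; omega)]
      simp [Prod.ext_iff, Fin.ext_iff] <;> omega
    · rw [dif_neg h, dif_pos (by simp; omega)]
      simp [Prod.ext_iff, Fin.ext_iff] <;> omega

lemma bdry_add {n k : ℕ} (c₁ c₂ : PChain n (k + 1)) :
    bdry (c₁ + c₂) = bdry c₁ + bdry c₂ := by
  unfold bdry
  apply Finsupp.sum_add_index
  · intro σ _; simp
  · intro σ _ b₁ b₂
    rw [← Finset.sum_add_distrib]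
    refine Finset.sum_congr rfl fun i _ => ?_
    rw [mul_add, add_smul]

lemma bdry_zero {n k : ℕ} : bdry (0 : PChain n (k + 1)) = 0 := by
  unfold bdry
  exact Finsupp.sum_zero_index

lemma bdry_finset_sum {n k : ℕ} {ι : Type*} (s : Finset ι) (f : ι → PChain n (k + 1)) :
    bdry (∑ i ∈ s, f i) = ∑ i ∈ s, bdry (f i) := by
  induction s using Finset.cons_induction with
  | empty => simp [bdry_zero]
  | cons i s hi ih => rw [Finset.sum_cons, Finset.sum_cons, bdry_add, ih]

lemma bdry_single' {n k : ℕ} (σ : Fin (k + 2) → (Fin (n + 1) → ℕ)) (c : ℂ) :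
    bdry (Finsupp.single σ c) =
      ∑ i : Fin (k + 2), ((-1 : ℂ) ^ (i : ℕ) * c) • Finsupp.single (σ ∘ i.succAbove) 1 := by
  unfold bdry
  apply Finsupp.sum_single_index
  simp

lemma exists_sum_eq {m : ℕ} (y : Fin m → ℕ) (d : ℕ) (hd : d ≤ ∑ i, y i) :
    ∃ x : Fin m → ℕ, (∀ i, x i ≤ y i) ∧ ∑ i, x i = d := by
  induction d with
  | zero => exact ⟨0, fun i => Nat.zero_le _, by simp⟩
  | succ d ih =>
    obtain ⟨x, hx, hxs⟩ := ih (le_trans (Nat.le_succ d) hd)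
    obtain ⟨i, hi⟩ : ∃ i, x i < y i := by
      by_contra hc
      push_neg at hc
      have := Finset.sum_le_sum (fun i (_ : i ∈ Finset.univ) => hc i)
      omega
    refine ⟨fun j => x j + (if j = i then 1 else 0), fun j => ?_, ?_⟩
    · rcases eq_or_ne j i with rfl | hji
      · simpa using hi
      · simp [hji, hx j]
    · rw [Finset.sum_add_distrib, hxs, Finset.sum_ite_eq' Finset.univ i (fun _ => 1)]
      simp

end StmtAux


/-- `UFO_{p+1,p+1}`, part of Lemma 11; here `p = p'+1 ≥ 1`.
Let `r ≠ l`, `β ∈ ℕA_{d,n}` with `deg β ≥ p+2`, and let `η = ⟨a¹,…,a^{p+1}⟩` be a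
`p`-simplex of `Δ_β` with `(a¹+⋯+a^{p+1})_r = β_r` and `(aʲ)_r > 0` for all `j`
(a `UFO_{p+1,p+1}^r`, with empty joined cycle).  Then there is a `p`-chain `η̃` in
`Δ_{β+e_l−e_r}` with `∂η̃ = ∂η`. -/
theorem stmt10 (d n p' : ℕ) (r l : Fin (n + 1)) (hrl : r ≠ l)
    (β : Fin (n + 1) → ℕ) (hβ : β ∈ AddSubmonoid.closure (Adn d n))
    (hdeg : (p' + 3) * d ≤ ∑ i, β i)
    (a : Fin (p' + 2) → (Fin (n + 1) → ℕ)) (hainj : Function.Injective a)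
    (hface : IsFace d n β (Finset.image a Finset.univ))
    (har : ∑ j, a j r = β r) (hapos : ∀ j, 0 < a j r) :
    ∃ η' : PChain n (p' + 1), ChainIn d n (β + ee l - ee r) η' ∧
      bdry η' = bdry (Finsupp.single a (1 : ℂ)) := by
  classical
  -- basic facts about the vertices `a j`
  have haAdn : ∀ j, ∑ k, a j k = d := by
    intro j
    have h : a j ∈ Adn d n :=
      hface.1 (Finset.mem_coe.2 (Finset.mem_image_of_mem a (Finset.mem_univ j)))
    exact h
  have hsum : ∀ k, ∑ j, a j k ≤ β k := by
    intro k
    have h := hface.2 k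
    rwa [Finset.sum_image (fun u _ v _ h => hainj h)] at h
  -- choose the auxiliary vertex `x`
  have hyd : d ≤ ∑ k, (β k - ∑ j, a j k) := by
    have h1 : ∑ k, ((β k - ∑ j, a j k) + ∑ j, a j k) = ∑ k, β k :=
      Finset.sum_congr rfl fun k _ => Nat.sub_add_cancel (hsum k)
    rw [Finset.sum_add_distrib] at h1
    have hmul : (p' + 3) * d = (p' + 2) * d + d := by ring
    have h2 : ∑ k, ∑ j, a j k = (p' + 2) * d := by
      rw [Finset.sum_comm, Finset.sum_congr rfl fun j (_ : j ∈ Finset.univ) => haAdn j]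
      simp [Finset.sum_const, mul_comm]
    omega
  obtain ⟨x, hxle, hxd⟩ := exists_sum_eq _ d hyd
  have hxβ : ∀ k, x k + ∑ j, a j k ≤ β k := fun k => by
    have h1 := hxle k; have h2 := hsum k; omega
  have hxr : x r = 0 := by
    have h1 := hxle r
    rw [har] at h1
    omega
  have hxa : ∀ j, x ≠ a j := by
    intro j h
    have h2 := hapos j
    rw [← h, hxr] at h2
    exact absurd h2 (lt_irrefl 0)
  refine ⟨∑ i : Fin (p' + 2),
      Finsupp.single (Fin.cons x (a ∘ i.succAbove)) ((-1 : ℂ) ^ (i : ℕ)), ?_, ?_⟩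
  · -- the chain is supported on Δ_{β + e_l - e_r}
    intro σ hσ
    have hσ' := Finsupp.support_finset_sum hσ
    rw [Finset.mem_biUnion] at hσ'
    obtain ⟨i, -, hi⟩ := hσ'
    have hσeq : σ = Fin.cons x (a ∘ i.succAbove) := by
      have h := Finsupp.support_single_subset hi
      simpa using h
    subst hσeq
    constructor
    · intro v hv
      rw [Finset.mem_coe, Finset.mem_image] at hv
      obtain ⟨m, -, rfl⟩ := hv
      induction m using Fin.cases with
      | zero => simpa [Adn] using hxd
      | succ m' => simpa [Adn] using haAdn (i.succAbove m')
    · intro k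
      have hinj : Function.Injective (Fin.cons x (a ∘ i.succAbove)) := by
        rw [Fin.cons_injective_iff]
        refine ⟨?_, hainj.comp Fin.succAbove_right_injective⟩
        rintro ⟨m, hm⟩
        exact hxa (i.succAbove m) hm.symm
      rw [Finset.sum_image (fun u _ v _ h => hinj h), Fin.sum_univ_succ]
      simp only [Fin.cons_zero, Fin.cons_succ, Function.comp_apply]
      have hsplit : ∑ j : Fin (p' + 2), a j k
          = a i k + ∑ m : Fin (p' + 1), a (i.succAbove m) k :=
        Fin.sum_univ_succAbove (fun j => a j k) i
      have hval : (β + ee l - ee r) k = β k + ee l k - ee r k := rfl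
      rw [hval]
      rcases eq_or_ne k r with rfl | hk
      · have e1 : ee l k = 0 := by simp [ee, hrl]
        have e2 : ee k k = 1 := by simp [ee]
        rw [e1, e2]
        have h3 := hapos i
        omega
      · have e2 : ee r k = 0 := by simp [ee, hk]
        rw [e2]
        have h4 := hxβ k
        omega
  · -- the boundary of the chain is ∂η
    rw [bdry_finset_sum]
    have hstep : ∀ i : Fin (p' + 2),
        bdry (Finsupp.single (Fin.cons x (a ∘ i.succAbove)) ((-1 : ℂ) ^ (i : ℕ))) =
          ((-1 : ℂ) ^ (i : ℕ)) • Finsupp.single (a ∘ i.succAbove) 1 +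
            ∑ m' : Fin (p' + 1),
              (-((-1 : ℂ) ^ ((i : ℕ) + (m' : ℕ)))) •
                Finsupp.single ((Fin.cons x (a ∘ (i.succAbove ∘ m'.succAbove)) : Fin (p' + 1) → (Fin (n + 1) → ℕ))) 1 := by
      intro i
      rw [bdry_single', Fin.sum_univ_succ]
      congr 1
      · have h0 : (Fin.cons x (a ∘ i.succAbove)) ∘ (0 : Fin (p' + 2)).succAbove
            = a ∘ i.succAbove := by
          funext m
          simp [Fin.succAbove_zero]
        rw [h0]
        norm_num
      · refine Finset.sum_congr rfl fun m' _ => ?_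
        have hcomp : (Fin.cons x (a ∘ i.succAbove)) ∘ (m'.succ : Fin (p' + 2)).succAbove
            = (Fin.cons x (a ∘ (i.succAbove ∘ m'.succAbove)) : Fin (p' + 1) → (Fin (n + 1) → ℕ)) := by
          funext j
          induction j using Fin.cases with
          | zero => simp [Fin.succ_succAbove_zero]
          | succ j' => rw [Function.comp_apply, Fin.succ_succAbove_succ]; simp
        rw [hcomp]
        congr 1
        rw [Fin.val_succ, pow_succ, pow_add]
        ring
    rw [Finset.sum_congr rfl fun i _ => hstep i, Finset.sum_add_distrib]
    have hz : ∑ i : Fin (p' + 2), ∑ m' : Fin (p' + 1),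
        (-((-1 : ℂ) ^ ((i : ℕ) + (m' : ℕ)))) •
          Finsupp.single ((Fin.cons x (a ∘ (i.succAbove ∘ m'.succAbove)) : Fin (p' + 1) → (Fin (n + 1) → ℕ))) (1 : ℂ) = 0 := by
      have h := double_sum_cancel
        (fun g : Fin p' → Fin (p' + 2) => Finsupp.single ((Fin.cons x (a ∘ g)) : Fin (p' + 1) → (Fin (n + 1) → ℕ)) (1 : ℂ))
      simp only [neg_smul, Finset.sum_neg_distrib, neg_eq_zero]
      exact h
    rw [hz, add_zero, bdry_single']
    simp [mul_one]
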